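/- arXiv:0910.4927 — 2 statements merged into one kernel-verified Lean document; each statement's English description precedes it below -/
import Mathlib

section
/- Let σ be the first exit time of a simple symmetric random walk on ℤ started at 1 from the interval [1, 2ℓ−1], where 2ℓ is an integer greater than 1. Then for 0 ≤ λ < λ_crit(ℓ) := −ln(cos(π/(2ℓ))), the moment generating function satisfies E[e^{λσ}] = cos(c_λ(ℓ−1))/cos(c_λ ℓ), where c_λ = arccos(e^{−λ}). -/
/-!
Let `u_n(x) = E[e^{λσ}; σ ≤ n]` for the walk started at `x`. Averaging over the `2^n` equally
likely sign patterns of the first `n` steps shows `u_{n+1}(x) = e^λ (u_n(x-1) + u_n(x+1)) / 2`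
inside the interval and `u_n = 1` outside it. Since `e^λ cos c = 1`, the profile
`h(x) = cos(c(x-ℓ)) / cos(cℓ)` solves the same equation with the same boundary values, and
`h ≥ 1` on `[0, 2ℓ]`, so `u_n ≤ h` by comparison. The sine `sin(πx/(2ℓ))`, vanishing at both
ends, is an eigenfunction of the averaging with eigenvalue `cos(π/(2ℓ))`, so comparison also gives
`h - u_n ≤ C (e^λ cos(π/(2ℓ)))^n sin(πx/(2ℓ))`. The condition `λ < λ_crit` says exactly that
`e^λ cos(π/(2ℓ)) < 1`, hence `u_n → h`, and monotone convergence identifies the limit with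
`E[e^{λσ}; σ < ∞]`. For `λ = 0` this gives `P(σ < ∞) = 1`, so the junk value `sInf ∅ = 0` in the
statement does not matter.
-/

open MeasureTheory ProbabilityTheory Filter Topology Set Real

namespace RandomWalkExit

open scoped Classical

def walk (x : ℤ) (y : ℕ → ℤ) (k : ℕ) : ℤ := x + ∑ i ∈ Finset.range k, y i

/-- Junk value: `0` for a walk that never leaves `S`. -/
noncomputable def exitTime (S : Set ℤ) (x : ℤ) (y : ℕ → ℤ) : ℕ := sInf {k | walk x y k ∉ S}

noncomputable def exitExp (S : Set ℤ) (lam : ℝ) (x : ℤ) (y : ℕ → ℤ) : ℝ :=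
  if ∃ k, walk x y k ∉ S then exp (lam * exitTime S x y) else 0

section Path

variable (S : Set ℤ) (lam : ℝ)

noncomputable def exitWeight : (n : ℕ) → ℤ → (Fin n → ℤ) → ℝ
  | 0, x, _ => if x ∈ S then 0 else 1
  | n + 1, x, z => if x ∈ S then exp lam * exitWeight n (x + z 0) (Fin.tail z) else 1

noncomputable def meanExitWeight : ℕ → ℤ → ℝ
  | 0, x => if x ∈ S then 0 else 1
  | n + 1, x => if x ∈ S then
      exp lam * (meanExitWeight n (x - 1) + meanExitWeight n (x + 1)) / 2 else 1

def boolSign (b : Bool) : ℤ := if b then 1 else -1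

lemma boolSign_injective : Function.Injective boolSign := by
  decide

variable {S}

lemma walk_zero (x : ℤ) (y : ℕ → ℤ) : walk x y 0 = x := by simp [walk]

lemma walk_succ (x : ℤ) (y : ℕ → ℤ) (k : ℕ) :
    walk x y (k + 1) = walk (x + y 0) (fun i => y (i + 1)) k := by
  simp only [walk, Finset.sum_range_succ']
  ring

lemma exitTime_eq_zero {x : ℤ} (hx : x ∉ S) (y : ℕ → ℤ) : exitTime S x y = 0 :=
  Nat.sInf_eq_zero.2 (.inl (by simpa [walk_zero] using hx))

lemma exitTime_succ {x : ℤ} (hx : x ∈ S) {y : ℕ → ℤ} (hexit : ∃ k, walk x y k ∉ S) :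
    exitTime S x y = exitTime S (x + y 0) (fun i => y (i + 1)) + 1 := by
  have hpos : 1 ≤ exitTime S x y := by
    refine Nat.one_le_iff_ne_zero.2 fun h => ?_
    have := Nat.sInf_mem (s := {k | walk x y k ∉ S}) hexit
    rw [← exitTime, h] at this
    exact this (by rwa [walk_zero])
  simp only [exitTime, ← walk_succ]
  exact (Nat.sInf_add hpos).symm

lemma exists_walk_notMem_succ_iff {x : ℤ} (hx : x ∈ S) (y : ℕ → ℤ) (n : ℕ) :
    (∃ k ≤ n + 1, walk x y k ∉ S) ↔ ∃ k ≤ n, walk (x + y 0) (fun i => y (i + 1)) k ∉ S := by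
  constructor
  · rintro ⟨_ | k, hk, hexit⟩
    · exact absurd hx (by rwa [walk_zero] at hexit)
    · exact ⟨k, by omega, by rwa [walk_succ] at hexit⟩
  · rintro ⟨k, hk, hexit⟩
    exact ⟨k + 1, by omega, by rwa [walk_succ]⟩

lemma exitWeight_eq (n : ℕ) (x : ℤ) (y : ℕ → ℤ) :
    exitWeight S lam n x (fun i => y i) =
      if ∃ k ≤ n, walk x y k ∉ S then exp (lam * exitTime S x y) else 0 := by
  induction n generalizing x y with
  | zero =>
    by_cases hx : x ∈ S
    · simp [exitWeight, hx, walk_zero]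
    · simp [exitWeight, hx, walk_zero, exitTime_eq_zero hx]
  | succ n ih =>
    by_cases hx : x ∈ S
    · have ih' := ih (x + y 0) (fun i => y (i + 1))
      beta_reduce at ih'
      rw [exitWeight, if_pos hx]
      change exp lam * exitWeight S lam n (x + y 0) (fun i => y (i + 1)) = _
      rw [ih']
      simp only [exists_walk_notMem_succ_iff hx]
      split_ifs with hexit
      · obtain ⟨k, -, hk⟩ := hexit
        rw [exitTime_succ hx ⟨k + 1, by rwa [walk_succ]⟩, ← Real.exp_add]
        push_cast
        ring_nf
      · simp
    · rw [exitWeight, if_neg hx, if_pos ⟨0, by omega, by rwa [walk_zero]⟩,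
        exitTime_eq_zero hx]
      simp

lemma exitWeight_nonneg (n : ℕ) (x : ℤ) (y : ℕ → ℤ) :
    0 ≤ exitWeight S lam n x (fun i => y i) := by
  rw [exitWeight_eq]
  split_ifs <;> positivity

lemma exitWeight_le_exp (n : ℕ) (x : ℤ) (y : ℕ → ℤ) :
    exitWeight S lam n x (fun i => y i) ≤ exp (|lam| * n) := by
  rw [exitWeight_eq]
  split_ifs with hexit
  · obtain ⟨k, hk, hkS⟩ := hexit
    have hσ : (exitTime S x y : ℝ) ≤ n := by exact_mod_cast (Nat.sInf_le hkS).trans hk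
    refine Real.exp_le_exp.2 ?_
    calc lam * exitTime S x y ≤ |lam| * exitTime S x y := by gcongr; exact le_abs_self lam
      _ ≤ |lam| * n := by gcongr
  · positivity

lemma monotone_exitWeight (x : ℤ) (y : ℕ → ℤ) :
    Monotone fun n => exitWeight S lam n x (fun i => y i) := by
  intro n n' hn
  simp only [exitWeight_eq]
  split_ifs with h h' h'
  · rfl
  · exact absurd (h.imp fun k hk => ⟨hk.1.trans hn, hk.2⟩) h'
  · positivity
  · rfl

lemma tendsto_exitWeight (x : ℤ) (y : ℕ → ℤ) :
    Tendsto (fun n => exitWeight S lam n x (fun i => y i)) atTop (𝓝 (exitExp S lam x y)) := by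
  simp only [exitWeight_eq, exitExp]
  split_ifs with hexit
  · obtain ⟨k, hk⟩ := hexit
    exact tendsto_atTop_of_eventually_const (i₀ := k) fun n hn => if_pos ⟨k, hn, hk⟩
  · exact tendsto_const_nhds.congr fun n => (if_neg fun h => hexit (h.imp fun k hk => hk.2)).symm

lemma meanExitWeight_succ_of_mem (n : ℕ) {x : ℤ} (hx : x ∈ S) :
    meanExitWeight S lam (n + 1) x =
      exp lam * (meanExitWeight S lam n (x - 1) + meanExitWeight S lam n (x + 1)) / 2 := by
  rw [meanExitWeight, if_pos hx]

lemma meanExitWeight_of_notMem (n : ℕ) {x : ℤ} (hx : x ∉ S) :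
    meanExitWeight S lam n x = 1 := by
  cases n <;> simp [meanExitWeight, hx]

lemma exitWeight_boolSign_cons (n : ℕ) (x : ℤ) (b₀ : Bool) (b : Fin n → Bool) :
    exitWeight S lam (n + 1) x (boolSign ∘ Fin.cons b₀ b) =
      if x ∈ S then exp lam * exitWeight S lam n (x + boolSign b₀) (boolSign ∘ b) else 1 := by
  rw [exitWeight, Fin.comp_cons, Fin.cons_zero, Fin.tail_cons]

lemma sum_exitWeight_boolSign (n : ℕ) (x : ℤ) :
    ∑ b : Fin n → Bool, exitWeight S lam n x (boolSign ∘ b) = 2 ^ n * meanExitWeight S lam n x := by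
  induction n generalizing x with
  | zero => simp [exitWeight, meanExitWeight]
  | succ n ih =>
    have hsplit : ∑ b : Fin (n + 1) → Bool, exitWeight S lam (n + 1) x (boolSign ∘ b) =
        ∑ b₀ : Bool, ∑ b : Fin n → Bool, exitWeight S lam (n + 1) x (boolSign ∘ Fin.cons b₀ b) := by
      rw [← (Fin.consEquiv fun _ => Bool).sum_comp, Fintype.sum_prod_type]
      rfl
    simp only [hsplit, exitWeight_boolSign_cons, Fintype.sum_bool]
    by_cases hx : x ∈ S
    · simp only [if_pos hx, ← Finset.mul_sum, ih, meanExitWeight, boolSign, if_true,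
        Bool.false_eq_true, if_false, ← sub_eq_add_neg]
      ring
    · simp only [if_neg hx, meanExitWeight, Finset.sum_const, Finset.card_univ, Fintype.card_fun,
        Fintype.card_bool, Fintype.card_fin, nsmul_eq_mul, mul_one]
      push_cast
      ring

end Path

lemma integral_eq_of_monotone_of_tendsto {α : Type*} [MeasurableSpace α] {μ : Measure α}
    {f : ℕ → α → ℝ} {F : α → ℝ} {L : ℝ} (hf : ∀ n, Integrable (f n) μ)
    (hf_nonneg : ∀ n, 0 ≤ᵐ[μ] f n) (hmono : ∀ᵐ a ∂μ, Monotone fun n => f n a)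
    (hF : ∀ᵐ a ∂μ, Tendsto (fun n => f n a) atTop (𝓝 (F a)))
    (hL : Tendsto (fun n => ∫ a, f n a ∂μ) atTop (𝓝 L)) :
    ∫ a, F a ∂μ = L := by
  have hF_nonneg : 0 ≤ᵐ[μ] F := by
    filter_upwards [hF, ae_all_iff.2 hf_nonneg] with a ha h0 using ge_of_tendsto' ha h0
  have hlim := lintegral_tendsto_of_tendsto_of_monotone
    (fun n => (hf n).1.aemeasurable.ennreal_ofReal)
    (hmono.mono fun a ha m n hmn => ENNReal.ofReal_le_ofReal (ha hmn))
    (hF.mono fun a ha => (ENNReal.continuous_ofReal.tendsto _).comp ha)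
  have hlim' : Tendsto (fun n => ∫⁻ a, ENNReal.ofReal (f n a) ∂μ) atTop
      (𝓝 (ENNReal.ofReal L)) := by
    simp_rw [← ofReal_integral_eq_lintegral_ofReal (hf _) (hf_nonneg _)]
    exact (ENNReal.continuous_ofReal.tendsto L).comp hL
  rw [integral_eq_lintegral_of_nonneg_ae hF_nonneg
      (aestronglyMeasurable_of_tendsto_ae _ (fun n => (hf n).1) hF),
    tendsto_nhds_unique hlim hlim',
    ENNReal.toReal_ofReal (ge_of_tendsto' hL fun n => integral_nonneg_of_ae (hf_nonneg n))]

section Steps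

variable {Ω : Type*} [MeasurableSpace Ω] {μ : Measure Ω} {Y : ℕ → Ω → ℤ}

lemma measure_steps_eq_boolSign (hindep : iIndepFun Y μ)
    (hup : ∀ i, μ {ω | Y i ω = 1} = 1 / 2) (hdown : ∀ i, μ {ω | Y i ω = -1} = 1 / 2)
    {n : ℕ} (b : Fin n → Bool) :
    μ {ω | ∀ i : Fin n, Y i ω = boolSign (b i)} = 2⁻¹ ^ n := by
  have hstep : ∀ i : Fin n, μ (Y i ⁻¹' {boolSign (b i)}) = 2⁻¹ := by
    intro i
    cases b i
    · simpa [boolSign, Set.preimage] using hdown i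
    · simpa [boolSign, Set.preimage] using hup i
  rw [show {ω | ∀ i : Fin n, Y i ω = boolSign (b i)} = ⋂ i : Fin n, Y i ⁻¹' {boolSign (b i)} by
      ext; simp,
    (hindep.precomp Fin.val_injective).meas_iInter fun i => ⟨_, trivial, rfl⟩]
  simp [hstep]

lemma ae_step_eq_one_or_neg_one [IsProbabilityMeasure μ] (hmeas : ∀ i, Measurable (Y i))
    (hup : ∀ i, μ {ω | Y i ω = 1} = 1 / 2) (hdown : ∀ i, μ {ω | Y i ω = -1} = 1 / 2) :
    ∀ᵐ ω ∂μ, ∀ i, Y i ω = 1 ∨ Y i ω = -1 := by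
  refine ae_all_iff.2 fun i => ?_
  have h1 : MeasurableSet {ω | Y i ω = 1} := hmeas i (measurableSet_singleton 1)
  have h2 : MeasurableSet {ω | Y i ω = -1} := hmeas i (measurableSet_singleton (-1))
  have hdisj : Disjoint {ω | Y i ω = 1} {ω | Y i ω = -1} :=
    Set.disjoint_left.2 fun ω (h : Y i ω = 1) (h' : Y i ω = -1) => by omega
  change μ ({ω | Y i ω = 1} ∪ {ω | Y i ω = -1})ᶜ = 0
  rw [prob_compl_eq_zero_iff (h1.union h2), measure_union hdisj h2, hup, hdown,
    ENNReal.add_halves]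

lemma integral_comp_steps [IsProbabilityMeasure μ] (hmeas : ∀ i, Measurable (Y i))
    (hindep : iIndepFun Y μ)
    (hup : ∀ i, μ {ω | Y i ω = 1} = 1 / 2) (hdown : ∀ i, μ {ω | Y i ω = -1} = 1 / 2)
    {n : ℕ} (G : (Fin n → ℤ) → ℝ) :
    ∫ ω, G (fun i => Y i ω) ∂μ = (2 ^ n)⁻¹ * ∑ b : Fin n → Bool, G (boolSign ∘ b) := by
  let A : (Fin n → Bool) → Set Ω := fun b => {ω | ∀ i : Fin n, Y i ω = boolSign (b i)}
  have hA : ∀ b, MeasurableSet (A b) := fun b => by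
    simp only [A, Set.ofPred_forall]
    exact .iInter fun i => hmeas i (measurableSet_singleton _)
  have hsum : (fun ω => G (fun i => Y i ω)) =ᵐ[μ]
      fun ω => ∑ b, (A b).indicator (fun _ => G (boolSign ∘ b)) ω := by
    filter_upwards [ae_step_eq_one_or_neg_one hmeas hup hdown] with ω hω
    let b₀ : Fin n → Bool := fun i => decide (Y i ω = 1)
    have hb₀ : (fun i : Fin n => Y i ω) = boolSign ∘ b₀ := by
      ext i
      rcases hω i with h | h <;> simp [b₀, boolSign, h]
    have hmem : ∀ b, ω ∈ A b ↔ b₀ = b := fun b => by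
      rw [← boolSign_injective.comp_left.eq_iff, ← hb₀, funext_iff]
      rfl
    simp only [Set.indicator, hmem, Finset.sum_ite_eq, Finset.mem_univ, if_true, ← hb₀]
  rw [integral_congr_ae hsum,
    integral_finsetSum _ fun b _ => (integrable_const _).indicator (hA b), Finset.mul_sum]
  refine Finset.sum_congr rfl fun b _ => ?_
  rw [integral_indicator_const _ (hA b), measureReal_def,
    measure_steps_eq_boolSign hindep hup hdown b]
  simp

lemma integral_exitWeight [IsProbabilityMeasure μ] (hmeas : ∀ i, Measurable (Y i))
    (hindep : iIndepFun Y μ)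
    (hup : ∀ i, μ {ω | Y i ω = 1} = 1 / 2) (hdown : ∀ i, μ {ω | Y i ω = -1} = 1 / 2)
    (S : Set ℤ) (lam : ℝ) (n : ℕ) (x : ℤ) :
    ∫ ω, exitWeight S lam n x (fun i => Y i ω) ∂μ = meanExitWeight S lam n x := by
  rw [integral_comp_steps hmeas hindep hup hdown, sum_exitWeight_boolSign, ← mul_assoc,
    inv_mul_cancel₀ (by positivity), one_mul]

lemma integral_exitExp [IsProbabilityMeasure μ] (hmeas : ∀ i, Measurable (Y i))
    (hindep : iIndepFun Y μ)
    (hup : ∀ i, μ {ω | Y i ω = 1} = 1 / 2) (hdown : ∀ i, μ {ω | Y i ω = -1} = 1 / 2)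
    {S : Set ℤ} {lam : ℝ} {x : ℤ} {L : ℝ}
    (hL : Tendsto (fun n => meanExitWeight S lam n x) atTop (𝓝 L)) :
    ∫ ω, exitExp S lam x (fun i => Y i ω) ∂μ = L := by
  have hint : ∀ n, Integrable (fun ω => exitWeight S lam n x (fun i => Y i ω)) μ := fun n =>
    .of_bound ((measurable_of_countable (exitWeight S lam n x)).comp
        (measurable_pi_lambda (fun ω (i : Fin n) => Y i ω) fun i => hmeas i)).aestronglyMeasurable
      (exp (|lam| * n)) (.of_forall fun ω =>
        (Real.norm_of_nonneg (exitWeight_nonneg lam n x fun i => Y i ω)).trans_le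
          (exitWeight_le_exp lam n x fun i => Y i ω))
  refine integral_eq_of_monotone_of_tendsto hint
    (fun n => .of_forall fun ω => exitWeight_nonneg lam n x fun i => Y i ω)
    (.of_forall fun ω => monotone_exitWeight lam x fun i => Y i ω)
    (.of_forall fun ω => tendsto_exitWeight lam x fun i => Y i ω) ?_
  simpa only [integral_exitWeight hmeas hindep hup hdown] using hL

lemma ae_exists_walk_notMem [IsProbabilityMeasure μ] (hmeas : ∀ i, Measurable (Y i))
    (hindep : iIndepFun Y μ)
    (hup : ∀ i, μ {ω | Y i ω = 1} = 1 / 2) (hdown : ∀ i, μ {ω | Y i ω = -1} = 1 / 2)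
    {S : Set ℤ} {x : ℤ}
    (hL : Tendsto (fun n => meanExitWeight S 0 n x) atTop (𝓝 1)) :
    ∀ᵐ ω ∂μ, ∃ k, walk x (fun i => Y i ω) k ∉ S := by
  let E : Set Ω := {ω | ∃ k, walk x (fun i => Y i ω) k ∉ S}
  have hE : MeasurableSet E := by
    simp only [E, Set.ofPred_exists]
    exact .iUnion fun k => (measurable_const.add (Finset.measurable_sum _ fun i _ => hmeas i))
      (MeasurableSet.of_discrete (s := Sᶜ))
  have hint := integral_exitExp hmeas hindep hup hdown hL
  simp only [exitExp, zero_mul, Real.exp_zero] at hint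
  rw [show (fun ω => if ∃ k, walk x (fun i => Y i ω) k ∉ S then (1 : ℝ) else 0) = E.indicator 1
      from funext fun ω => by simp [E, Set.indicator_apply], integral_indicator_one hE,
    measureReal_def, ENNReal.toReal_eq_one_iff] at hint
  exact mem_ae_iff.2 ((prob_compl_eq_zero_iff hE).2 hint)

end Steps

lemma le_of_subsolution_of_supersolution {S D : Set ℤ} (hSD : ∀ x ∈ S, x - 1 ∈ D ∧ x + 1 ∈ D)
    {K : ℝ} (hK : 0 ≤ K) {w v : ℕ → ℤ → ℝ} (h_init : ∀ x ∈ D, w 0 x ≤ v 0 x)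
    (h_bdry : ∀ n, ∀ x ∈ D, x ∉ S → w (n + 1) x ≤ v (n + 1) x)
    (hw : ∀ n, ∀ x ∈ S, w (n + 1) x ≤ K * (w n (x - 1) + w n (x + 1)) / 2)
    (hv : ∀ n, ∀ x ∈ S, K * (v n (x - 1) + v n (x + 1)) / 2 ≤ v (n + 1) x) :
    ∀ n, ∀ x ∈ D, w n x ≤ v n x := by
  intro n
  induction n with
  | zero => exact h_init
  | succ n ih =>
    intro x hx
    by_cases hxS : x ∈ S
    · obtain ⟨h₁, h₂⟩ := hSD x hxS
      calc w (n + 1) x ≤ K * (w n (x - 1) + w n (x + 1)) / 2 := hw n x hxS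
        _ ≤ K * (v n (x - 1) + v n (x + 1)) / 2 := by gcongr <;> exact ih _ ‹_›
        _ ≤ v (n + 1) x := hv n x hxS
    · exact h_bdry n x hx hxS

section Interval

variable {m : ℤ}

lemma Icc_sub_one_add_one_mem {x : ℤ} (hx : x ∈ Icc 1 (m - 1)) :
    x - 1 ∈ Icc 0 m ∧ x + 1 ∈ Icc 0 m := by
  simp only [mem_Icc] at hx ⊢
  omega

lemma eq_zero_or_eq_of_mem_Icc_of_notMem {x : ℤ} (hx : x ∈ Icc 0 m) (hxS : x ∉ Icc 1 (m - 1)) :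
    x = 0 ∨ x = m := by
  simp only [mem_Icc, not_and_or, not_le] at hx hxS
  omega

noncomputable def cosProfile (m : ℤ) (c : ℝ) (x : ℤ) : ℝ :=
  cos (c * (x - m / 2)) / cos (c * m / 2)

variable {c : ℝ}

lemma cos_mul_half_pos (hm : 0 ≤ m) (hc : 0 ≤ c) (hcm : c * m < π) :
    0 < cos (c * m / 2) := by
  have : 0 ≤ c * m := mul_nonneg hc (by exact_mod_cast hm)
  exact Real.cos_pos_of_mem_Ioo ⟨by linarith [Real.pi_pos], by linarith⟩

lemma cosProfile_avg {lam : ℝ} (hc : cos c = exp (-lam)) (x : ℤ) :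
    exp lam * (cosProfile m c (x - 1) + cosProfile m c (x + 1)) / 2 = cosProfile m c x := by
  have hsum : cos (c * ((x - 1 : ℤ) - m / 2)) + cos (c * ((x + 1 : ℤ) - m / 2)) =
      2 * cos c * cos (c * (x - m / 2)) := by
    push_cast
    rw [show c * (x - 1 - m / 2) = c * (x - m / 2) - c by ring,
      show c * (x + 1 - m / 2) = c * (x - m / 2) + c by ring, Real.cos_sub, Real.cos_add]
    ring
  have hexp : exp lam * cos c = 1 := by rw [hc, ← Real.exp_add, add_neg_cancel, Real.exp_zero]
  simp only [cosProfile, ← add_div, hsum]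
  linear_combination (cos (c * (x - m / 2)) / cos (c * m / 2)) * hexp

lemma one_le_cosProfile (hc : 0 ≤ c) (hcm : c * m < π) {x : ℤ} (hx : x ∈ Icc 0 m) :
    1 ≤ cosProfile m c x := by
  have hx' : (0 : ℝ) ≤ x ∧ (x : ℝ) ≤ m := by exact_mod_cast hx
  have hm : 0 ≤ m := hx.1.trans hx.2
  have : 0 ≤ c * m := mul_nonneg hc (hx'.1.trans hx'.2)
  refine (one_le_div (cos_mul_half_pos hm hc hcm)).2 ?_
  rw [← Real.cos_abs (c * _)]
  refine Real.cos_le_cos_of_nonneg_of_le_pi (abs_nonneg _) (by linarith) ?_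
  rw [abs_mul, abs_of_nonneg hc, mul_div_assoc]
  exact mul_le_mul_of_nonneg_left (abs_le.2 ⟨by linarith, by linarith⟩) hc

lemma cosProfile_le (hm : 0 ≤ m) (hc : 0 ≤ c) (hcm : c * m < π) (x : ℤ) :
    cosProfile m c x ≤ (cos (c * m / 2))⁻¹ := by
  rw [cosProfile, div_eq_mul_inv]
  exact mul_le_of_le_one_left (inv_pos.2 (cos_mul_half_pos hm hc hcm)).le (Real.cos_le_one _)

lemma cosProfile_eq_one (hm : 0 ≤ m) (hc : 0 ≤ c) (hcm : c * m < π) {x : ℤ}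
    (hx : x = 0 ∨ x = m) : cosProfile m c x = 1 := by
  have hpos := cos_mul_half_pos hm hc hcm
  rcases hx with h | h <;> rw [cosProfile, h]
  · rw [show c * (((0 : ℤ) : ℝ) - m / 2) = -(c * m / 2) by push_cast; ring,
      Real.cos_neg, div_self hpos.ne']
  · rw [show c * ((m : ℝ) - m / 2) = c * m / 2 by ring, div_self hpos.ne']

lemma sin_sub_one_add_sin_add_one (a t : ℝ) :
    sin (a * (t - 1)) + sin (a * (t + 1)) = 2 * cos a * sin (a * t) := by
  rw [mul_sub, mul_add, mul_one, Real.sin_sub, Real.sin_add]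
  ring

lemma sin_pi_div_mul_nonneg (hm : 0 < m) {x : ℤ} (hx : x ∈ Icc 0 m) :
    0 ≤ sin (π / m * x) := by
  have hx' : (0 : ℝ) ≤ x ∧ (x : ℝ) ≤ m := by exact_mod_cast hx
  have hm' : (0 : ℝ) < m := by exact_mod_cast hm
  refine Real.sin_nonneg_of_nonneg_of_le_pi (mul_nonneg (by positivity) hx'.1) ?_
  calc π / m * x ≤ π / m * m := by gcongr; exact hx.2
    _ = π := by field_simp

lemma sin_pi_div_mul_eq_zero {x : ℤ} (hx : x = 0 ∨ x = m) : sin (π / m * x) = 0 := by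
  rcases hx with hx | hx <;> rw [hx]
  · simp
  · rcases eq_or_ne (m : ℝ) 0 with h | h
    · simp [h]
    · rw [div_mul_cancel₀ _ h, Real.sin_pi]

lemma sin_pi_div_le_sin_pi_div_mul (hm : 0 < m) {x : ℤ} (hx : x ∈ Icc 1 (m - 1)) :
    sin (π / m) ≤ sin (π / m * x) := by
  have hx' : (1 : ℝ) ≤ x ∧ (x : ℝ) ≤ m - 1 := by exact_mod_cast hx
  have hm' : (0 : ℝ) < m := by exact_mod_cast hm
  set a := π / m
  have ha : 0 ≤ a := by positivity
  have ham : a * m = π := div_mul_cancel₀ _ hm'.ne'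
  have h₁ : a ≤ a * x := le_mul_of_one_le_right ha hx'.1
  have h₂ : a * x ≤ π - a := by nlinarith
  rcases le_total (a * x) (π / 2) with h | h
  · exact Real.sin_le_sin_of_le_of_le_pi_div_two (by linarith [Real.pi_pos]) h h₁
  · rw [← Real.sin_pi_sub (a * x)]
    exact Real.sin_le_sin_of_le_of_le_pi_div_two (by linarith [Real.pi_pos]) (by linarith)
      (by linarith)

variable {lam : ℝ}

lemma meanExitWeight_le_cosProfile (hc : cos c = exp (-lam)) (hc0 : 0 ≤ c)
    (hcm : c * m < π) :
    ∀ n, ∀ x ∈ Icc 0 m, meanExitWeight (Icc 1 (m - 1)) lam n x ≤ cosProfile m c x := by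
  refine le_of_subsolution_of_supersolution (fun x => Icc_sub_one_add_one_mem)
    (Real.exp_pos lam).le (v := fun _ => cosProfile m c) (fun x hx => ?_) (fun n x hx hxS => ?_)
    (fun n x hxS => (meanExitWeight_succ_of_mem lam n hxS).le)
    (fun n x _ => (cosProfile_avg hc x).le)
  · have := one_le_cosProfile hc0 hcm hx
    rw [meanExitWeight]
    split_ifs <;> linarith
  · rw [meanExitWeight_of_notMem lam _ hxS]
    exact one_le_cosProfile hc0 hcm hx

lemma cosProfile_sub_meanExitWeight_le (hm : 2 ≤ m) (hc : cos c = exp (-lam))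
    (hc0 : 0 ≤ c) (hcm : c * m < π) :
    ∀ n, ∀ x ∈ Icc 0 m, cosProfile m c x - meanExitWeight (Icc 1 (m - 1)) lam n x ≤
      (cos (c * m / 2) * sin (π / m))⁻¹ *
        (exp lam * cos (π / m)) ^ n * sin (π / m * x) := by
  have hm0 : 0 ≤ m := by omega
  have hsin : 0 < sin (π / m) := by
    have hm' : (2 : ℝ) ≤ m := by exact_mod_cast hm
    refine Real.sin_pos_of_pos_of_lt_pi (by positivity) ?_
    rw [div_lt_iff₀ (by positivity)]
    nlinarith [Real.pi_pos]
  have hC : 0 < (cos (c * m / 2) * sin (π / m))⁻¹ :=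
    inv_pos.2 (mul_pos (cos_mul_half_pos hm0 hc0 hcm) hsin)
  refine le_of_subsolution_of_supersolution (fun x => Icc_sub_one_add_one_mem)
    (Real.exp_pos lam).le (fun x hx => ?_) (fun n x hx hxS => ?_) (fun n x hxS => ?_)
    (fun n x hxS => ?_)
  · by_cases hxS : x ∈ Icc 1 (m - 1)
    · rw [meanExitWeight, if_pos hxS, sub_zero]
      calc cosProfile m c x ≤ (cos (c * m / 2))⁻¹ := cosProfile_le hm0 hc0 hcm x
        _ = (cos (c * m / 2) * sin (π / m))⁻¹ * sin (π / m) := by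
          field_simp [hsin.ne']
        _ ≤ _ := by
          rw [pow_zero, mul_one]
          exact mul_le_mul_of_nonneg_left (sin_pi_div_le_sin_pi_div_mul (by omega) hxS) hC.le
    · rw [meanExitWeight_of_notMem lam 0 hxS,
        cosProfile_eq_one hm0 hc0 hcm (eq_zero_or_eq_of_mem_Icc_of_notMem hx hxS), sub_self]
      exact mul_nonneg (by positivity) (sin_pi_div_mul_nonneg (by omega) hx)
  · have hx₀ := eq_zero_or_eq_of_mem_Icc_of_notMem hx hxS
    rw [meanExitWeight_of_notMem lam _ hxS, cosProfile_eq_one hm0 hc0 hcm hx₀,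
      sin_pi_div_mul_eq_zero hx₀]
    simp
  · rw [meanExitWeight_succ_of_mem lam n hxS, ← cosProfile_avg hc x]
    apply le_of_eq
    ring
  · have := sin_sub_one_add_sin_add_one (π / m) x
    push_cast
    linear_combination (exp lam * (cos (c * m / 2) * sin (π / m))⁻¹ *
      (exp lam * cos (π / m)) ^ n / 2) * this

lemma tendsto_meanExitWeight (hm : 2 ≤ m) (hc : cos c = exp (-lam)) (hc0 : 0 ≤ c)
    (hcm : c * m < π) {x : ℤ} (hx : x ∈ Icc 0 m) :
    Tendsto (fun n => meanExitWeight (Icc 1 (m - 1)) lam n x) atTop (𝓝 (cosProfile m c x)) := by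
  have hm' : (2 : ℝ) ≤ m := by exact_mod_cast hm
  have hca : c < π / m := (lt_div_iff₀ (by positivity)).2 hcm
  have hr0 : 0 ≤ exp lam * cos (π / m) := by
    refine mul_nonneg (Real.exp_pos lam).le (Real.cos_nonneg_of_mem_Icc ⟨?_, ?_⟩)
    · linarith [Real.pi_pos, div_nonneg Real.pi_pos.le (by positivity : (0 : ℝ) ≤ m)]
    · rw [div_le_div_iff₀ (by positivity) two_pos]
      nlinarith [Real.pi_pos]
  have hr1 : exp lam * cos (π / m) < 1 := by
    have := Real.cos_lt_cos_of_nonneg_of_le_pi hc0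
      (div_le_self Real.pi_pos.le (by linarith)) hca
    calc exp lam * cos (π / m) < exp lam * cos c := by gcongr
      _ = 1 := by rw [hc, ← Real.exp_add, add_neg_cancel, Real.exp_zero]
  have hlow : Tendsto (fun n => cosProfile m c x - (cos (c * m / 2) * sin (π / m))⁻¹ *
      (exp lam * cos (π / m)) ^ n * sin (π / m * x)) atTop
      (𝓝 (cosProfile m c x)) := by
    simpa using tendsto_const_nhds.sub
      (((tendsto_pow_atTop_nhds_zero_of_lt_one hr0 hr1).const_mul _).mul_const
        (sin (π / m * x)))
  exact tendsto_of_tendsto_of_tendsto_of_le_of_le hlow tendsto_const_nhds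
    (fun n => by linarith [cosProfile_sub_meanExitWeight_le hm hc hc0 hcm n x hx])
    (fun n => meanExitWeight_le_cosProfile hc hc0 hcm n x hx)

lemma tendsto_meanExitWeight_zero (hm : 2 ≤ m) {x : ℤ} (hx : x ∈ Icc 0 m) :
    Tendsto (fun n => meanExitWeight (Icc 1 (m - 1)) 0 n x) atTop (𝓝 1) := by
  simpa [cosProfile] using
    tendsto_meanExitWeight hm (by simp) le_rfl (by simpa using Real.pi_pos) hx

end Interval

lemma arccos_exp_neg_lt {a lam : ℝ} (ha0 : 0 ≤ a) (haπ : a ≤ π) (h0 : 0 ≤ lam)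
    (hcrit : lam < -log (cos a)) : arccos (exp (-lam)) < a := by
  have hlt : cos a < exp (-lam) := by
    rcases lt_or_ge 0 (cos a) with hpos | hnonpos
    · rw [← Real.exp_log hpos]
      exact Real.exp_lt_exp.2 (by linarith)
    · exact hnonpos.trans_lt (Real.exp_pos _)
  calc arccos (exp (-lam)) < arccos (cos a) :=
        Real.arccos_lt_arccos (Real.neg_one_le_cos a) hlt (Real.exp_le_one_iff.2 (by linarith))
    _ = a := Real.arccos_cos ha0 haπ

lemma pos_of_lt_neg_log_cos {ℓ : ℕ} {lam : ℝ} (h0 : 0 ≤ lam)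
    (hcrit : lam < -log (cos (π / (2 * ℓ)))) : 0 < ℓ := by
  rcases Nat.eq_zero_or_pos ℓ with rfl | hℓ
  · simp at hcrit
    linarith
  · exact hℓ

end RandomWalkExit

open RandomWalkExit in
theorem stmt7_general {Ω : Type*} [MeasurableSpace Ω] (μ : Measure Ω) [IsProbabilityMeasure μ]
    (Y : ℕ → Ω → ℤ) (hmeas : ∀ i, Measurable (Y i))
    (hindep : iIndepFun Y μ)
    (hup : ∀ i, μ {ω | Y i ω = 1} = 1/2) (hdown : ∀ i, μ {ω | Y i ω = -1} = 1/2)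
    (ℓ : ℕ) (lam : ℝ) (h0 : 0 ≤ lam)
    (hcrit : lam < -Real.log (Real.cos (Real.pi / (2 * ℓ)))) :
    ∫ ω, Real.exp (lam *
        (sInf {k : ℕ | (1 + ∑ i ∈ Finset.range k, Y i ω) ∉
          Set.Icc (1 : ℤ) (2 * ℓ - 1)} : ℕ)) ∂μ
      = Real.cos (Real.arccos (Real.exp (-lam)) * ((ℓ : ℝ) - 1)) /
          Real.cos (Real.arccos (Real.exp (-lam)) * ℓ) := by
  have hℓ := pos_of_lt_neg_log_cos h0 hcrit
  have hℓ' : (1 : ℝ) ≤ ℓ := by exact_mod_cast hℓ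
  set c := arccos (exp (-lam))
  have hc : cos c = exp (-lam) :=
    Real.cos_arccos (by linarith [Real.exp_pos (-lam)]) (Real.exp_le_one_iff.2 (by linarith))
  have hcm : c * ((2 * ℓ : ℤ) : ℝ) < π := by
    have := arccos_exp_neg_lt (by positivity) (div_le_self Real.pi_pos.le (by linarith)) h0 hcrit
    push_cast
    rwa [← lt_div_iff₀ (by positivity)]
  have hm : (2 : ℤ) ≤ 2 * ℓ := by omega
  have h1 : (1 : ℤ) ∈ Icc (0 : ℤ) (2 * ℓ) := ⟨zero_le_one, by omega⟩
  have hexit : ∀ᵐ ω ∂μ, ∃ k, walk 1 (fun i => Y i ω) k ∉ Icc (1 : ℤ) (2 * ℓ - 1) :=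
    ae_exists_walk_notMem hmeas hindep hup hdown (tendsto_meanExitWeight_zero hm h1)
  calc _ = ∫ ω, exitExp (Icc 1 (2 * ℓ - 1)) lam 1 (fun i => Y i ω) ∂μ :=
        integral_congr_ae (hexit.mono fun ω hω => (if_pos hω).symm)
    _ = cosProfile (2 * ℓ) c 1 :=
        integral_exitExp hmeas hindep hup hdown
          (tendsto_meanExitWeight hm hc (Real.arccos_nonneg _) hcm h1)
    _ = _ := by
      rw [cosProfile, show c * (((1 : ℤ) : ℝ) - ((2 * ℓ : ℤ) : ℝ) / 2) = -(c * (ℓ - 1)) by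
          push_cast; ring,
        Real.cos_neg, show c * ((2 * ℓ : ℤ) : ℝ) / 2 = c * ℓ by push_cast; ring]

/-- Let `σ` be the first exit time from `[1, 2ℓ-1]` of a simple symmetric random walk
`X_k = 1 + Y_1 + ⋯ + Y_k` started at `1`, built from i.i.d. fair `±1` steps `Y_i`.
Then for `0 ≤ λ < λ_crit(ℓ) = -ln cos(π/(2ℓ))`,
`E[e^{λσ}] = cos(c_λ(ℓ-1)) / cos(c_λ ℓ)` where `c_λ = arccos(e^{-λ})`. -/
theorem stmt7 {Ω : Type*} [MeasurableSpace Ω] (μ : Measure Ω) [IsProbabilityMeasure μ]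
    (Y : ℕ → Ω → ℤ) (hmeas : ∀ i, Measurable (Y i))
    (hindep : iIndepFun Y μ)
    (hup : ∀ i, μ {ω | Y i ω = 1} = 1/2) (hdown : ∀ i, μ {ω | Y i ω = -1} = 1/2)
    (ℓ : ℕ) (hℓ : 1 ≤ ℓ) (lam : ℝ) (h0 : 0 ≤ lam)
    (hcrit : lam < -Real.log (Real.cos (Real.pi / (2 * ℓ)))) :
    ∫ ω, Real.exp (lam *
        (sInf {k : ℕ | (1 + ∑ i ∈ Finset.range k, Y i ω) ∉
          Set.Icc (1 : ℤ) (2 * ℓ - 1)} : ℕ)) ∂μ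
      = Real.cos (Real.arccos (Real.exp (-lam)) * ((ℓ : ℝ) - 1)) /
          Real.cos (Real.arccos (Real.exp (-lam)) * ℓ) :=
  stmt7_general μ Y hmeas hindep hup hdown ℓ lam h0 hcrit
end

section
/- Let 2ℓ be an integer greater than 1, let ε ∈ (0,1), and set λ(ε,ℓ) = (1−ε)²π²/(8ℓ²). Let σ be the first exit time from [1, 2ℓ−1] of a simple symmetric random walk started at 1. Then E[e^{λ(ε,ℓ)σ}] < 1 + C₁/ℓ, where C₁ = ((1−ε)π/2) · tan((1−ε)π/2). -/
/-!
If `cos c = exp (-θ)`, then `φ x = cos (c (x - ℓ))` satisfies `exp θ · E φ (x + Y) = φ x` for a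
fair `±1` step `Y`, so `exp (θ n) φ (X n)` stopped on leaving `[1, 2ℓ - 1]` has constant
expectation `φ 1`. Since `φ ≥ cos (c ℓ) > 0` on `[0, 2ℓ]`, that stopped process dominates
`cos (c ℓ) · exp (θ (n ∧ σ))`, and monotone convergence gives
`E[exp (θ σ)] ≤ cos (c (ℓ - 1)) / cos (c ℓ) = cos c + tan (c ℓ) sin c`.
For `θ = λ(ε, ℓ) = t² / 2` with `t = (1 - ε) π / (2ℓ)`, the bound `cos t ≤ exp (-t² / 2)` gives
`c ≤ t`; then `cos c < 1`, `sin c ≤ t` and `tan (c ℓ) ≤ tan ((1 - ε) π / 2)`.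
-/

open MeasureTheory ProbabilityTheory Filter Topology Finset Real

theorem Real.cos_le_exp_neg_sq_div_two {t : ℝ} (h₀ : 0 ≤ t) (h₁ : t ≤ π / 2) :
    cos t ≤ exp (-(t ^ 2 / 2)) := by
  set f : ℝ → ℝ := fun x => cos x * exp (x ^ 2 / 2)
  have hf : ∀ x, HasDerivAt f (exp (x ^ 2 / 2) * (x * cos x - sin x)) x := fun x =>
    ((hasDerivAt_cos x).mul ((hasDerivAt_pow 2 x).div_const 2).exp).congr_deriv (by
      push_cast; ring)
  have hanti : AntitoneOn f (Set.Icc 0 (π / 2)) := by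
    refine antitoneOn_of_deriv_nonpos (convex_Icc _ _)
      (fun x _ => (hf x).continuousAt.continuousWithinAt)
      (fun x _ => (hf x).differentiableAt.differentiableWithinAt) fun x hx => ?_
    rw [interior_Icc] at hx
    have hcos : 0 < cos x := cos_pos_of_mem_Ioo ⟨by linarith [hx.1, pi_pos], hx.2⟩
    have : x * cos x ≤ sin x := by
      simpa [tan_eq_sin_div_cos, le_div_iff₀ hcos] using le_tan hx.1.le hx.2
    rw [(hf x).deriv]
    exact mul_nonpos_of_nonneg_of_nonpos (exp_pos _).le (by linarith)
  have h := hanti ⟨le_rfl, by positivity⟩ ⟨h₀, h₁⟩ h₀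
  simp only [f, cos_zero, ne_eq, OfNat.ofNat_ne_zero, not_false_eq_true, zero_pow, zero_div,
    exp_zero, mul_one] at h
  rwa [exp_neg, ← one_div, le_div_iff₀ (exp_pos _)]

theorem Real.arccos_exp_neg_sq_div_two_le {t : ℝ} (h₀ : 0 ≤ t) (h₁ : t ≤ π / 2) :
    arccos (exp (-(t ^ 2 / 2))) ≤ t :=
  calc arccos (exp (-(t ^ 2 / 2))) ≤ arccos (cos t) :=
        arccos_le_arccos (cos_le_exp_neg_sq_div_two h₀ h₁)
    _ = t := arccos_cos h₀ (by linarith [pi_pos])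

theorem Real.cos_mul_sub_div_cos_mul_lt {c L α : ℝ} (hc : 0 < c) (hL : 1 ≤ L) (hcL : c * L ≤ α)
    (hα : α < π / 2) : cos (c * L - c) / cos (c * L) < 1 + α * tan α / L := by
  have hc_le : c ≤ α / L := (le_div_iff₀ (by linarith)).2 hcL
  have hcL' : c ≤ c * L := le_mul_of_one_le_right hc.le hL
  have hcos : 0 < cos (c * L) := cos_pos_of_mem_Ioo ⟨by linarith [pi_pos], by linarith⟩
  have hcos_c : cos c < 1 := by
    simpa using cos_lt_cos_of_nonneg_of_le_pi le_rfl (by linarith [pi_pos]) hc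
  have htan₀ : 0 ≤ tan (c * L) :=
    tan_nonneg_of_nonneg_of_le_pi_div_two (by linarith) (by linarith)
  have htan : tan (c * L) ≤ tan α := strictMonoOn_tan.monotoneOn
    ⟨by linarith [pi_pos], by linarith⟩ ⟨by linarith [pi_pos], hα⟩ hcL
  have hsin₀ : 0 ≤ sin c := sin_nonneg_of_nonneg_of_le_pi hc.le (by linarith [pi_pos])
  calc cos (c * L - c) / cos (c * L) = cos c + tan (c * L) * sin c := by
        rw [cos_sub, tan_eq_sin_div_cos]
        field_simp
    _ < 1 + tan α * (α / L) := add_lt_add_of_lt_of_le hcos_c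
        (mul_le_mul htan ((sin_le hc.le).trans hc_le) hsin₀ (htan₀.trans htan))
    _ = 1 + α * tan α / L := by ring

section

variable {Ω : Type*}

lemma measurable_sInf_setOf [MeasurableSpace Ω] {p : ℕ → Ω → Prop}
    (hp : ∀ k, MeasurableSet {ω | p k ω}) : Measurable fun ω => sInf {k | p k ω} := by
  classical
  -- `sInf ∅ = 0`, so this is the first `k` with `p k ω ∨ ∀ j, ¬ p j ω`
  have hex : ∀ ω, ∃ k, p k ω ∨ ∀ j, ¬ p j ω := fun ω => by
    by_cases h : ∃ k, p k ω
    · exact h.imp fun _ => Or.inl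
    · exact ⟨0, .inr (not_exists.1 h)⟩
  have hmeas : ∀ k, MeasurableSet {ω | p k ω ∨ ∀ j, ¬ p j ω} := fun k => by
    simpa only [Set.ofPred_or, Set.ofPred_forall, Set.compl_ofPred] using
      (hp k).union (MeasurableSet.iInter fun j => (hp j).compl)
  convert measurable_find hex hmeas with ω
  refine ((Nat.find_eq_iff _).2 ⟨?_, fun k hk => ?_⟩).symm
  · rcases Set.eq_empty_or_nonempty {k | p k ω} with h | h
    · exact .inr fun j hj => h.subset hj
    · exact .inl (Nat.sInf_mem h)
  · have hne : {k | p k ω}.Nonempty := Nat.nonempty_of_pos_sInf (by omega)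
    exact not_or.2 ⟨Nat.notMem_of_lt_sInf hk, fun h => hne.elim h⟩

lemma setIntegral_eq_measureReal_mul_integral_of_indep {m₁ m₂ mΩ : MeasurableSpace Ω}
    {μ : Measure Ω} [IsFiniteMeasure μ] (hle₁ : m₁ ≤ mΩ) (hle₂ : m₂ ≤ mΩ)
    (hindep : Indep m₁ m₂ μ) {f : Ω → ℝ} (hf : StronglyMeasurable[m₁] f) (hfi : Integrable f μ)
    {s : Set Ω} (hs : MeasurableSet[m₂] s) :
    ∫ ω in s, f ω ∂μ = μ.real s * ∫ ω, f ω ∂μ := by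
  calc ∫ ω in s, f ω ∂μ = ∫ ω in s, (μ[f|m₂]) ω ∂μ := (setIntegral_condExp hle₂ hfi hs).symm
    _ = ∫ _ in s, μ[f] ∂μ := setIntegral_congr_ae (hle₂ _ hs)
        ((condExp_indep_eq hle₁ hle₂ hf hindep).mono fun _ h _ => h)
    _ = μ.real s * ∫ ω, f ω ∂μ := by rw [setIntegral_const, smul_eq_mul]

lemma integral_le_of_tendsto_of_monotone [MeasurableSpace Ω] {μ : Measure Ω}
    {f : ℕ → Ω → ℝ} {F : Ω → ℝ} {K : ℝ}
    (hf : ∀ n, Integrable (f n) μ) (h_nonneg : ∀ n, 0 ≤ᵐ[μ] f n)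
    (h_mono : ∀ᵐ ω ∂μ, Monotone fun n => f n ω)
    (h_tendsto : ∀ᵐ ω ∂μ, Tendsto (fun n => f n ω) atTop (𝓝 (F ω)))
    (hK : ∀ n, ∫ ω, f n ω ∂μ ≤ K) :
    ∫ ω, F ω ∂μ ≤ K := by
  have hF_nonneg : 0 ≤ᵐ[μ] F := by
    filter_upwards [ae_all_iff.2 h_nonneg, h_tendsto] with ω h0 hω
    exact ge_of_tendsto' hω h0
  rw [integral_eq_lintegral_of_nonneg_ae hF_nonneg
    (aestronglyMeasurable_of_tendsto_ae _ (fun n => (hf n).1) h_tendsto)]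
  refine ENNReal.toReal_le_of_le_ofReal ((integral_nonneg_of_ae (h_nonneg 0)).trans (hK 0)) ?_
  refine le_of_tendsto' (lintegral_tendsto_of_tendsto_of_monotone
    (fun n => (hf n).aemeasurable.ennreal_ofReal)
    (h_mono.mono fun ω h _ _ hnm => ENNReal.ofReal_le_ofReal (h hnm))
    (h_tendsto.mono fun ω h => (ENNReal.continuous_ofReal.tendsto _).comp h)) fun n => ?_
  rw [← ofReal_integral_eq_lintegral_ofReal (hf n) (h_nonneg n)]
  exact ENNReal.ofReal_le_ofReal (hK n)

lemma integrable_comp_of_abs_le [MeasurableSpace Ω] {μ : Measure Ω} [IsFiniteMeasure μ]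
    {φ : ℤ → ℝ} {C : ℝ} (hφ : ∀ x, |φ x| ≤ C) {Z : Ω → ℤ} (hZ : Measurable Z) :
    Integrable (fun ω => φ (Z ω)) μ :=
  .of_bound ((measurable_of_countable φ).comp hZ).aestronglyMeasurable C
    (ae_of_all _ fun ω => hφ (Z ω))

end

structure IsRademacherSequence {Ω : Type*} [MeasurableSpace Ω] (Y : ℕ → Ω → ℤ)
    (μ : Measure Ω) : Prop where
  measurable : ∀ i, Measurable (Y i)
  indep : iIndepFun Y μ
  measure_eq_one : ∀ i, μ {ω | Y i ω = 1} = 1 / 2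
  measure_eq_neg_one : ∀ i, μ {ω | Y i ω = -1} = 1 / 2

lemma IsRademacherSequence.ae_eq_one_or_eq_neg_one {Ω : Type*} [MeasurableSpace Ω]
    {μ : Measure Ω} [IsProbabilityMeasure μ] {Y : ℕ → Ω → ℤ} (hY : IsRademacherSequence Y μ) :
    ∀ᵐ ω ∂μ, ∀ i, Y i ω = 1 ∨ Y i ω = -1 := by
  refine ae_all_iff.2 fun i => ?_
  have hm : ∀ y : ℤ, MeasurableSet {ω | Y i ω = y} := fun y =>
    measurableSet_eq_fun (hY.measurable i) measurable_const
  have hdisj : Disjoint {ω | Y i ω = 1} {ω | Y i ω = -1} :=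
    Set.disjoint_left.2 fun ω h₁ h₂ => by simp_all
  have hfull : μ ({ω | Y i ω = 1} ∪ {ω | Y i ω = -1}) = 1 := by
    rw [measure_union hdisj (hm _), hY.measure_eq_one, hY.measure_eq_neg_one, ENNReal.add_halves]
  exact (prob_compl_eq_zero_iff ((hm _).union (hm _))).2 hfull

namespace SimpleRandomWalk

variable {Ω : Type*} (Y : ℕ → Ω → ℤ) (x₀ : ℤ) (I : Set ℤ)

def walk (k : ℕ) (ω : Ω) : ℤ := x₀ + ∑ i ∈ range k, Y i ω

def survives (n : ℕ) : Set Ω := {ω | ∀ k ≤ n, walk Y x₀ k ω ∈ I}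

/-- `0`, the junk value of `sInf ∅`, if the walk never leaves `I`. -/
noncomputable def exitTime (ω : Ω) : ℕ := sInf {k | walk Y x₀ k ω ∉ I}

abbrev stepsBefore (n : ℕ) : MeasurableSpace Ω :=
  ⨆ i < n, MeasurableSpace.comap (Y i) inferInstance

open Classical in
/-- `exp (θ (n ∧ τ)) * φ (walk (n ∧ τ))`, where `τ ∈ ℕ∞` is the first time the walk is outside
`I` (`τ = ∞` if it never leaves). -/
noncomputable def stoppedExpProcess (θ : ℝ) (φ : ℤ → ℝ) : ℕ → Ω → ℝ
  | 0 => fun _ => φ x₀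
  | n + 1 => (survives Y x₀ I n).piecewise
      (fun ω => exp (θ * (n + 1 : ℕ)) * φ (walk Y x₀ (n + 1) ω)) (stoppedExpProcess θ φ n)

variable {Y x₀ I}

lemma walk_succ (k : ℕ) (ω : Ω) : walk Y x₀ (k + 1) ω = walk Y x₀ k ω + Y k ω := by
  simp [walk, sum_range_succ, add_assoc]

lemma survives_succ_subset (n : ℕ) : survives Y x₀ I (n + 1) ⊆ survives Y x₀ I n :=
  fun _ h k hk => h k (hk.trans n.le_succ)

lemma exitTime_le_of_notMem_survives {n : ℕ} {ω : Ω} (h : ω ∉ survives Y x₀ I n) :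
    exitTime Y x₀ I ω ≤ n := by
  obtain ⟨k, hk, hkI⟩ : ∃ k ≤ n, walk Y x₀ k ω ∉ I := by simpa [survives] using h
  exact (Nat.sInf_le hkI).trans hk

lemma measurable_walk_stepsBefore {k n : ℕ} (hkn : k ≤ n) :
    Measurable[stepsBefore Y n] (walk Y x₀ k) :=
  measurable_const.add <| Finset.measurable_sum _ fun i hi =>
    measurable_iff_comap_le.2 <| le_iSup₂ (f := fun i (_ : i < n) =>
      MeasurableSpace.comap (Y i) inferInstance) i ((mem_range.1 hi).trans_le hkn)

lemma measurableSet_survives_stepsBefore (n : ℕ) :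
    MeasurableSet[stepsBefore Y n] (survives Y x₀ I n) := by
  simp only [survives, Set.ofPred_forall]
  exact .iInter fun k => .iInter fun hk => measurable_walk_stepsBefore hk .of_discrete

lemma stoppedExpProcess_of_mem_survives {θ : ℝ} {φ : ℤ → ℝ} {n : ℕ} {ω : Ω}
    (h : ω ∈ survives Y x₀ I n) :
    stoppedExpProcess Y x₀ I θ φ n ω = exp (θ * n) * φ (walk Y x₀ n ω) := by
  classical
  cases n with
  | zero => simp [stoppedExpProcess, walk]
  | succ n => simp [stoppedExpProcess, Set.piecewise_eq_of_mem _ _ _ (survives_succ_subset n h)]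

lemma exp_mul_min_exitTime_mul_le_stoppedExpProcess {θ m : ℝ} {φ : ℤ → ℝ} (hθ : 0 ≤ θ)
    (hm : 0 ≤ m) (hx₀ : m ≤ φ x₀) (hI : ∀ x ∈ I, m ≤ φ (x + 1) ∧ m ≤ φ (x - 1)) {ω : Ω}
    (hω : ∀ i, Y i ω = 1 ∨ Y i ω = -1) (n : ℕ) :
    exp (θ * (min (exitTime Y x₀ I ω) n : ℕ)) * m ≤ stoppedExpProcess Y x₀ I θ φ n ω := by
  classical
  induction n with
  | zero => simpa [stoppedExpProcess] using hx₀
  | succ n ih =>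
    by_cases h : ω ∈ survives Y x₀ I n
    · rw [stoppedExpProcess, Set.piecewise_eq_of_mem _ _ _ h]
      have hX := hI _ (h n le_rfl)
      have hφX : m ≤ φ (walk Y x₀ (n + 1) ω) := by
        rcases hω n with h₁ | h₁ <;> simp [walk_succ, h₁, hX, ← sub_eq_add_neg]
      refine mul_le_mul (exp_le_exp.2 ?_) hφX hm (exp_pos _).le
      exact mul_le_mul_of_nonneg_left (by exact_mod_cast min_le_right _ _) hθ
    · rw [stoppedExpProcess, Set.piecewise_eq_of_notMem _ _ _ h]
      have hτ := exitTime_le_of_notMem_survives h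
      rwa [min_eq_left (hτ.trans n.le_succ), ← min_eq_left hτ]

section Measure

variable [MeasurableSpace Ω] {μ : Measure Ω}

lemma stepsBefore_le (hY : ∀ i, Measurable (Y i)) (n : ℕ) :
    stepsBefore Y n ≤ ‹MeasurableSpace Ω› :=
  iSup₂_le fun i _ => (hY i).comap_le

lemma measurable_walk (hY : ∀ i, Measurable (Y i)) (k : ℕ) : Measurable (walk Y x₀ k) :=
  (measurable_walk_stepsBefore le_rfl).mono (stepsBefore_le hY k) le_rfl

lemma measurableSet_survives (hY : ∀ i, Measurable (Y i)) (n : ℕ) :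
    MeasurableSet (survives Y x₀ I n) :=
  stepsBefore_le hY n _ (measurableSet_survives_stepsBefore n)

lemma measurable_exitTime (hY : ∀ i, Measurable (Y i)) : Measurable (exitTime Y x₀ I) :=
  measurable_sInf_setOf fun k => (measurable_walk hY k .of_discrete).compl

lemma indep_stepsBefore (hY : IsRademacherSequence Y μ) (n : ℕ) :
    Indep (stepsBefore Y n) (MeasurableSpace.comap (Y n) inferInstance) μ := by
  simpa using indep_iSup_of_disjoint (fun i => (hY.measurable i).comap_le)
    ((iIndepFun_iff_iIndep _ _ _).1 hY.indep) (S := {i | i < n}) (T := {n}) (by simp)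

lemma setIntegral_comp_walk_succ [IsProbabilityMeasure μ] (hY : IsRademacherSequence Y μ)
    {n : ℕ} {s : Set Ω} (hs : MeasurableSet[stepsBefore Y n] s) {φ : ℤ → ℝ} {C : ℝ}
    (hφ : ∀ x, |φ x| ≤ C) :
    ∫ ω in s, φ (walk Y x₀ (n + 1) ω) ∂μ =
      ∫ ω in s, (φ (walk Y x₀ n ω + 1) + φ (walk Y x₀ n ω - 1)) / 2 ∂μ := by
  have hle := stepsBefore_le hY.measurable n
  have hint : ∀ y : ℤ, Integrable (fun ω => φ (walk Y x₀ n ω + y)) μ := fun y =>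
    integrable_comp_of_abs_le hφ ((measurable_walk hY.measurable n).add_const y)
  have hYm : ∀ y : ℤ, MeasurableSet {ω | Y n ω = y} := fun y =>
    measurableSet_eq_fun (hY.measurable n) measurable_const
  have half : ∀ y : ℤ, μ {ω | Y n ω = y} = 1 / 2 →
      ∫ ω in {ω | Y n ω = y}, s.indicator (fun ω => φ (walk Y x₀ (n + 1) ω)) ω ∂μ =
        2⁻¹ * ∫ ω in s, φ (walk Y x₀ n ω + y) ∂μ := fun y hy => by
    rw [setIntegral_congr_fun (g := s.indicator fun ω => φ (walk Y x₀ n ω + y)) (hYm y)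
        fun ω (hω : Y n ω = y) => by by_cases h : ω ∈ s <;> simp [h, walk_succ, hω],
      setIntegral_eq_measureReal_mul_integral_of_indep hle (hY.measurable n).comap_le
        (indep_stepsBefore hY n) ?_ ((hint y).indicator (hle _ hs))
        (s := {ω | Y n ω = y}) ⟨{y}, .of_discrete, rfl⟩,
      integral_indicator (hle _ hs), measureReal_def, hy]
    · norm_num
    · exact ((((measurable_of_countable φ).comp
        ((measurable_walk_stepsBefore le_rfl).add_const y)).indicator hs).stronglyMeasurable)
  have hfull : ({ω | Y n ω = 1} ∪ {ω | Y n ω = -1} : Set Ω) =ᵐ[μ] (Set.univ : Set Ω) :=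
    eventuallyEq_univ.2 (hY.ae_eq_one_or_eq_neg_one.mono fun ω h => h n)
  have hint' : Integrable (s.indicator fun ω => φ (walk Y x₀ (n + 1) ω)) μ :=
    (integrable_comp_of_abs_le hφ (measurable_walk hY.measurable _)).indicator (hle _ hs)
  rw [← integral_indicator (hle _ hs), ← setIntegral_univ, ← setIntegral_congr_set hfull,
    setIntegral_union (Set.disjoint_left.2 fun ω h₁ h₂ => by simp_all) (hYm _) hint'.integrableOn
      hint'.integrableOn, half 1 (hY.measure_eq_one n), half (-1) (hY.measure_eq_neg_one n),
    integral_div, integral_add (hint 1).integrableOn (integrable_comp_of_abs_le hφ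
      ((measurable_walk hY.measurable n).sub_const 1)).integrableOn]
  simp only [← sub_eq_add_neg]
  ring

lemma integrable_stoppedExpProcess [IsFiniteMeasure μ] (hY : ∀ i, Measurable (Y i))
    {φ : ℤ → ℝ} {C : ℝ} (hφ : ∀ x, |φ x| ≤ C) (θ : ℝ) (n : ℕ) :
    Integrable (stoppedExpProcess Y x₀ I θ φ n) μ := by
  classical
  induction n with
  | zero => exact integrable_const _
  | succ n ih =>
    exact .piecewise (measurableSet_survives hY n)
      ((integrable_comp_of_abs_le hφ (measurable_walk hY _)).const_mul _).integrableOn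
      ih.integrableOn

lemma integral_stoppedExpProcess [IsProbabilityMeasure μ] (hY : IsRademacherSequence Y μ)
    {θ : ℝ} {φ : ℤ → ℝ} {C : ℝ} (hφ : ∀ x, |φ x| ≤ C)
    (hharm : ∀ x ∈ I, exp θ * ((φ (x + 1) + φ (x - 1)) / 2) = φ x) (n : ℕ) :
    ∫ ω, stoppedExpProcess Y x₀ I θ φ n ω ∂μ = φ x₀ := by
  classical
  induction n with
  | zero => simp [stoppedExpProcess]
  | succ n ih =>
    have hB := measurableSet_survives (x₀ := x₀) (I := I) hY.measurable n
    have hF := integrable_stoppedExpProcess (μ := μ) (x₀ := x₀) (I := I) hY.measurable hφ θ n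
    have hstep : ∫ ω in survives Y x₀ I n, exp (θ * (n + 1 : ℕ)) * φ (walk Y x₀ (n + 1) ω) ∂μ =
        ∫ ω in survives Y x₀ I n, stoppedExpProcess Y x₀ I θ φ n ω ∂μ := by
      rw [integral_const_mul, setIntegral_comp_walk_succ hY (measurableSet_survives_stepsBefore n)
        hφ, ← integral_const_mul]
      refine setIntegral_congr_fun hB fun ω hω => ?_
      rw [stoppedExpProcess_of_mem_survives hω, ← hharm _ (hω n le_rfl), ← mul_assoc, ← exp_add]
      push_cast
      ring_nf
    rw [stoppedExpProcess, integral_piecewise hB ((integrable_comp_of_abs_le hφ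
      (measurable_walk hY.measurable _)).const_mul _).integrableOn hF.integrableOn, hstep,
      integral_add_compl hB hF, ih]

theorem integral_exp_mul_exitTime_le [IsProbabilityMeasure μ] (hY : IsRademacherSequence Y μ)
    {θ m C : ℝ} {φ : ℤ → ℝ} (hθ : 0 ≤ θ) (hm : 0 < m) (hφ : ∀ x, |φ x| ≤ C)
    (hharm : ∀ x ∈ I, exp θ * ((φ (x + 1) + φ (x - 1)) / 2) = φ x) (hx₀ : m ≤ φ x₀)
    (hI : ∀ x ∈ I, m ≤ φ (x + 1) ∧ m ≤ φ (x - 1)) :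
    ∫ ω, exp (θ * exitTime Y x₀ I ω) ∂μ ≤ φ x₀ / m := by
  have hmono : ∀ ω, Monotone fun n => exp (θ * (min (exitTime Y x₀ I ω) n : ℕ)) :=
    fun ω a b hab => exp_le_exp.2 <|
      mul_le_mul_of_nonneg_left (by exact_mod_cast min_le_min_left _ hab) hθ
  have hint : ∀ n, Integrable (fun ω => exp (θ * (min (exitTime Y x₀ I ω) n : ℕ))) μ := by
    intro n
    refine .of_bound ((measurable_from_nat (f := fun k => exp (θ * (min k n : ℕ)))).comp
      (measurable_exitTime hY.measurable)).aestronglyMeasurable (exp (θ * n))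
      (ae_of_all _ fun ω => ?_)
    rw [norm_of_nonneg (exp_pos _).le]
    exact exp_le_exp.2 (mul_le_mul_of_nonneg_left (by exact_mod_cast min_le_right _ _) hθ)
  refine integral_le_of_tendsto_of_monotone hint (fun n => ae_of_all _ fun ω => (exp_pos _).le)
    (ae_of_all _ hmono) (ae_of_all _ fun ω => tendsto_atTop_of_eventually_const
      (i₀ := exitTime Y x₀ I ω) fun n hn => by rw [min_eq_left hn]) fun n => ?_
  rw [le_div_iff₀ hm, ← integral_mul_const, ← integral_stoppedExpProcess hY hφ hharm n]
  refine integral_mono_ae ((hint n).mul_const _)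
    (integrable_stoppedExpProcess hY.measurable hφ θ n) ?_
  filter_upwards [hY.ae_eq_one_or_eq_neg_one] with ω hω
  exact exp_mul_min_exitTime_mul_le_stoppedExpProcess hθ hm.le hx₀ hI hω n

theorem integral_exp_mul_exitTime_Icc_le [IsProbabilityMeasure μ]
    (hY : IsRademacherSequence Y μ) {ℓ : ℕ} (hx₀ : x₀ ∈ Set.Icc 0 (2 * (ℓ : ℤ)))
    {θ c : ℝ} (hc : 0 ≤ c) (hcℓ : c * ℓ < π / 2) (hcos : cos c = exp (-θ)) :
    ∫ ω, exp (θ * exitTime Y x₀ (Set.Icc 1 (2 * ℓ - 1)) ω) ∂μ ≤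
      cos (c * (x₀ - ℓ)) / cos (c * ℓ) := by
  have hθ : 0 ≤ θ := by simpa [hcos] using cos_le_one c
  have hge : ∀ x ∈ Set.Icc 0 (2 * (ℓ : ℤ)), cos (c * ℓ) ≤ cos (c * (x - ℓ)) := by
    rintro x ⟨h₀, h₁⟩
    have h₀' : (0 : ℝ) ≤ x := by exact_mod_cast h₀
    have h₁' : (x : ℝ) ≤ 2 * ℓ := by exact_mod_cast h₁
    rw [← cos_abs (c * (x - ℓ))]
    refine cos_le_cos_of_nonneg_of_le_pi (abs_nonneg _) (by linarith [pi_pos]) ?_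
    rw [abs_mul, abs_of_nonneg hc]
    exact mul_le_mul_of_nonneg_left (abs_le.2 ⟨by linarith, by linarith⟩) hc
  refine integral_exp_mul_exitTime_le hY (φ := fun x : ℤ => cos (c * (x - ℓ))) (C := 1) hθ
    (cos_pos_of_mem_Ioo ⟨by linarith [pi_pos, mul_nonneg hc ℓ.cast_nonneg], hcℓ⟩)
    (fun x => abs_cos_le_one _) (fun x _ => ?_) (hge x₀ hx₀) fun x ⟨h₀, h₁⟩ =>
      ⟨hge _ ⟨by omega, by omega⟩, hge _ ⟨by omega, by omega⟩⟩
  push_cast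
  rw [show c * (x + 1 - ℓ) = c * (x - ℓ) + c by ring,
    show c * (x - 1 - ℓ) = c * (x - ℓ) - c by ring, cos_add, cos_sub, hcos, exp_neg]
  field_simp
  ring

end Measure

end SimpleRandomWalk

/-- Let `σ` be the first exit time from `[1, 2ℓ-1]` of a simple symmetric random walk
`X_k = 1 + Y_1 + ⋯ + Y_k` started at `1` (i.i.d. fair `±1` steps `Y_i`), `ε ∈ (0,1)`,
and `λ(ε,ℓ) = (1-ε)²π²/(8ℓ²)`. Then `E[e^{λ(ε,ℓ)σ}] < 1 + C₁/ℓ`, where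
`C₁ = ((1-ε)π/2)·tan((1-ε)π/2)`. -/
theorem stmt11 {Ω : Type*} [MeasurableSpace Ω] (μ : Measure Ω) [IsProbabilityMeasure μ]
    (Y : ℕ → Ω → ℤ) (hmeas : ∀ i, Measurable (Y i))
    (hindep : iIndepFun Y μ)
    (hup : ∀ i, μ {ω | Y i ω = 1} = 1/2) (hdown : ∀ i, μ {ω | Y i ω = -1} = 1/2)
    (ℓ : ℕ) (hℓ : 1 ≤ ℓ) (ε : ℝ) (hε : ε ∈ Set.Ioo (0:ℝ) 1) :
    ∫ ω, Real.exp ((1 - ε) ^ 2 * Real.pi ^ 2 / (8 * (ℓ : ℝ) ^ 2) *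
        (sInf {k : ℕ | (1 + ∑ i ∈ Finset.range k, Y i ω) ∉
          Set.Icc (1 : ℤ) (2 * ℓ - 1)} : ℕ)) ∂μ
      < 1 + ((1 - ε) * Real.pi / 2) * Real.tan ((1 - ε) * Real.pi / 2) / ℓ := by
  obtain ⟨hε₀, hε₁⟩ := hε
  have hℓ₁ : (1 : ℝ) ≤ ℓ := by exact_mod_cast hℓ
  set α := (1 - ε) * π / 2
  have hα : 0 < α := by have := pi_pos; unfold α; nlinarith
  have hαπ : α < π / 2 := by have := pi_pos; unfold α; nlinarith
  set θ := (α / ℓ) ^ 2 / 2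
  have hθ : 0 < θ := by positivity
  set c := arccos (exp (-θ))
  have hcos : cos c = exp (-θ) :=
    cos_arccos (by linarith [exp_pos (-θ)]) (exp_le_one_iff.2 (by linarith))
  have hc : 0 < c := arccos_pos.2 (exp_lt_one_iff.2 (by linarith))
  have hcℓ : c * ℓ ≤ α := (le_div_iff₀ (by linarith)).1 <|
    arccos_exp_neg_sq_div_two_le (by positivity) ((div_le_self hα.le hℓ₁).trans hαπ.le)
  have hbound := SimpleRandomWalk.integral_exp_mul_exitTime_Icc_le (μ := μ) (x₀ := 1)
    ⟨hmeas, hindep, hup, hdown⟩ ⟨by omega, by omega⟩ hc.le (hcℓ.trans_lt hαπ) hcos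
  have hθ_eq : (1 - ε) ^ 2 * π ^ 2 / (8 * (ℓ : ℝ) ^ 2) = θ := by
    unfold θ α; field_simp; ring
  calc _ = ∫ ω, exp (θ * SimpleRandomWalk.exitTime Y 1 (Set.Icc 1 (2 * ℓ - 1)) ω) ∂μ := by
        rw [hθ_eq]; rfl
    _ ≤ cos (c * ℓ - c) / cos (c * ℓ) := by
        convert hbound using 2; rw [← cos_neg]; push_cast; ring_nf
    _ < _ := cos_mul_sub_div_cos_mul_lt hc hℓ₁ hcℓ hαπ
end
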